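/- arXiv:2412.17908 — 2 statements merged into one kernel-verified Lean document; each statement's English description precedes it below -/
import Mathlib

section
/- (Black–Scholes call price formula.) Let S₀ > 0, K > 0, σ > 0, T > 0, r ∈ ℝ. Then e^{−rT} · (1/√(2π)) ∫_{−∞}^{∞} max(S₀·exp(σ y √T + (r − σ²/2) T) − K, 0) · e^{−y²/2} dy = S₀ Φ(d₊) − K e^{−rT} Φ(d₋), where d₊ = (log(S₀/K) + T(r + σ²/2))/(σ√T) and d₋ = d₊ − σ√T = (log(S₀/K) + T(r − σ²/2))/(σ√T). -/
open MeasureTheory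

/-- The standard normal cumulative distribution function
`Φ(y) = (1/√(2π)) ∫_{-∞}^{y} e^{-z²/2} dz`. -/
noncomputable def stdNormalCDF (y : ℝ) : ℝ :=
  (Real.sqrt (2 * Real.pi))⁻¹ * ∫ z in Set.Iio y, Real.exp (-(z ^ 2) / 2)

/-!
The payoff is positive exactly when `y > -d₋`, so the integral is
`S₀ e^{(r - σ²/2)T} ∫_{-d₋}^∞ e^{σ√T y} e^{-y²/2} dy - K ∫_{-d₋}^∞ e^{-y²/2} dy`.
Completing the square, `e^{a y} e^{-y²/2} = e^{a²/2} e^{-(y-a)²/2}`, turns the first integral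
into `e^{σ²T/2}` times the Gaussian mass of `(-d₋ - σ√T, ∞) = (-d₊, ∞)`, and by the symmetry of
the density the mass of `(-d, ∞)` is `√(2π) Φ(d)`.
-/

open Real Set

lemma integrable_exp_neg_sq_div_two : Integrable fun y : ℝ => exp (-(y ^ 2) / 2) :=
  (integrable_exp_neg_mul_sq (b := 1 / 2) (by norm_num)).congr
    (Filter.Eventually.of_forall fun y => by ring_nf)

lemma setIntegral_Ioi_comp_sub_right {E : Type*} [NormedAddCommGroup E] [NormedSpace ℝ E]
    (f : ℝ → E) (c d : ℝ) :
    ∫ y in Ioi c, f (y - d) = ∫ z in Ioi (c - d), f z := by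
  simpa using (measurePreserving_sub_right volume d).setIntegral_preimage_emb
    (measurableEmbedding_subRight d) f (Ioi (c - d))

lemma stdNormalCDF_eq_setIntegral_Ioi (d : ℝ) :
    stdNormalCDF d = (√(2 * π))⁻¹ * ∫ y in Ioi (-d), exp (-(y ^ 2) / 2) := by
  have h := integral_comp_neg_Ioi (-d) fun y => exp (-(y ^ 2) / 2)
  simp only [neg_sq, neg_neg] at h
  rw [stdNormalCDF, h, integral_Iic_eq_integral_Iio]

lemma exp_mul_mul_exp_neg_sq_div_two (a y : ℝ) :
    exp (a * y) * exp (-(y ^ 2) / 2) = exp (a ^ 2 / 2) * exp (-((y - a) ^ 2) / 2) := by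
  rw [← exp_add, ← exp_add]
  ring_nf

lemma integrable_exp_mul_mul_exp_neg_sq_div_two (a : ℝ) :
    Integrable fun y : ℝ => exp (a * y) * exp (-(y ^ 2) / 2) := by
  simpa only [exp_mul_mul_exp_neg_sq_div_two] using
    (integrable_exp_neg_sq_div_two.comp_sub_right a).const_mul (exp (a ^ 2 / 2))

lemma setIntegral_Ioi_exp_mul_mul_exp_neg_sq_div_two (a c : ℝ) :
    ∫ y in Ioi c, exp (a * y) * exp (-(y ^ 2) / 2)
      = exp (a ^ 2 / 2) * ∫ z in Ioi (c - a), exp (-(z ^ 2) / 2) := by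
  simp_rw [exp_mul_mul_exp_neg_sq_div_two, integral_const_mul]
  rw [setIntegral_Ioi_comp_sub_right fun z => exp (-(z ^ 2) / 2)]

lemma max_mul_exp_sub_zero_eq_indicator {S₀ K a : ℝ} (hS : 0 < S₀) (hK : 0 < K) (ha : 0 < a)
    (m y : ℝ) :
    max (S₀ * exp (a * y + m) - K) 0
      = (Ioi (-((log (S₀ / K) + m) / a))).indicator (fun y => S₀ * exp (a * y + m) - K) y := by
  have hmem : K < S₀ * exp (a * y + m) ↔ y ∈ Ioi (-((log (S₀ / K) + m) / a)) := by
    rw [← log_lt_log_iff hK (by positivity), log_mul hS.ne' (exp_pos _).ne', log_exp,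
      log_div hS.ne' hK.ne', mem_Ioi, neg_div', div_lt_iff₀ ha]
    constructor <;> intro h <;> linarith
  by_cases h : K < S₀ * exp (a * y + m)
  · rw [indicator_of_mem (hmem.1 h), max_eq_left (by linarith)]
  · rw [indicator_of_notMem (mt hmem.2 h), max_eq_right (by linarith)]

theorem integral_max_mul_exp_sub_zero_mul_exp_neg_sq_div_two {S₀ K a : ℝ} (hS : 0 < S₀)
    (hK : 0 < K) (ha : 0 < a) (m : ℝ) :
    (√(2 * π))⁻¹ * ∫ y, max (S₀ * exp (a * y + m) - K) 0 * exp (-(y ^ 2) / 2)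
      = S₀ * exp (m + a ^ 2 / 2) * stdNormalCDF ((log (S₀ / K) + m) / a + a)
        - K * stdNormalCDF ((log (S₀ / K) + m) / a) := by
  set d := (log (S₀ / K) + m) / a
  have hsplit : ∀ y, (S₀ * exp (a * y + m) - K) * exp (-(y ^ 2) / 2)
      = S₀ * exp m * (exp (a * y) * exp (-(y ^ 2) / 2)) - K * exp (-(y ^ 2) / 2) := fun y => by
    rw [exp_add]; ring
  have hind : ∀ y, max (S₀ * exp (a * y + m) - K) 0 * exp (-(y ^ 2) / 2) = (Ioi (-d)).indicator
      (fun y => S₀ * exp m * (exp (a * y) * exp (-(y ^ 2) / 2)) - K * exp (-(y ^ 2) / 2)) y := by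
    intro y
    simp only [max_mul_exp_sub_zero_eq_indicator hS hK ha, ← hsplit]
    exact (indicator_mul_left (Ioi (-d)) (fun y => S₀ * exp (a * y + m) - K)
      fun y => exp (-(y ^ 2) / 2)).symm
  rw [integral_congr_ae (ae_of_all _ hind), integral_indicator measurableSet_Ioi, integral_sub
      ((integrable_exp_mul_mul_exp_neg_sq_div_two a).const_mul _).integrableOn
      (integrable_exp_neg_sq_div_two.const_mul _).integrableOn,
    integral_const_mul, integral_const_mul, setIntegral_Ioi_exp_mul_mul_exp_neg_sq_div_two,
    stdNormalCDF_eq_setIntegral_Ioi, stdNormalCDF_eq_setIntegral_Ioi, neg_add', exp_add]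
  ring

/-- The Black–Scholes call price formula: the discounted Gaussian expectation of the
call payoff `(S_T − K)⁺` equals `S₀ Φ(d₊) − K e^{−rT} Φ(d₋)`, where
`d₊ = (log(S₀/K) + T(r + σ²/2))/(σ√T)` and `d₋ = d₊ − σ√T`. -/
theorem black_scholes_call_price (S₀ K σ T r : ℝ)
    (hS : 0 < S₀) (hK : 0 < K) (hσ : 0 < σ) (hT : 0 < T) :
    (Real.exp (-(r * T)) * ((Real.sqrt (2 * Real.pi))⁻¹ *
        ∫ y : ℝ, max (S₀ * Real.exp (σ * y * Real.sqrt T + (r - σ ^ 2 / 2) * T) - K) 0 *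
          Real.exp (-(y ^ 2) / 2)) =
      S₀ * stdNormalCDF ((Real.log (S₀ / K) + T * (r + σ ^ 2 / 2)) / (σ * Real.sqrt T)) -
        K * Real.exp (-(r * T)) *
          stdNormalCDF ((Real.log (S₀ / K) + T * (r - σ ^ 2 / 2)) / (σ * Real.sqrt T))) ∧
    ((Real.log (S₀ / K) + T * (r + σ ^ 2 / 2)) / (σ * Real.sqrt T) - σ * Real.sqrt T =
      (Real.log (S₀ / K) + T * (r - σ ^ 2 / 2)) / (σ * Real.sqrt T)) := by
  have hvol : 0 < σ * √T := mul_pos hσ (sqrt_pos.2 hT)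
  have hdrift : (r - σ ^ 2 / 2) * T + (σ * √T) ^ 2 / 2 = r * T := by
    rw [mul_pow, sq_sqrt hT.le]; ring
  have hd_minus : (log (S₀ / K) + (r - σ ^ 2 / 2) * T) / (σ * √T)
      = (log (S₀ / K) + T * (r - σ ^ 2 / 2)) / (σ * √T) := by ring
  have hd_plus : (log (S₀ / K) + T * (r - σ ^ 2 / 2)) / (σ * √T) + σ * √T
      = (log (S₀ / K) + T * (r + σ ^ 2 / 2)) / (σ * √T) := by
    field_simp
    rw [sq_sqrt hT.le]; ring
  refine ⟨?_, by linarith⟩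
  have hprice :=
    integral_max_mul_exp_sub_zero_mul_exp_neg_sq_div_two hS hK hvol ((r - σ ^ 2 / 2) * T)
  rw [hdrift, hd_minus, hd_plus] at hprice
  simp_rw [mul_right_comm σ _ (√T)]
  rw [hprice, exp_neg]
  field_simp
end

section
/- (Optimal liquidation speed.) Let k > 0, α > 0, T > 0, and 𝒫 > 0 (the number of shares to be liquidated). For every measurable function ν : [0,T] → ℝ that is square-integrable on [0,T], the execution cost satisfies k ∫₀^T ν(t)² dt + α ( 𝒫 − ∫₀^T ν(t) dt )² ≥ k 𝒫² / (T + k/α), and equality holds for the constant liquidation speed ν*(t) = 𝒫 / (T + k/α). In particular, the constant strategy ν* minimizes the cost functional over all square-integrable strategies. -/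
/-!
Expanding `0 ≤ ∫₀^T (ν - c)²` bounds `∫₀^T ν²` from below by `2c B - c²T`, where `B = ∫₀^T ν`
is the liquidated volume. The cost is then at least a quadratic in `B` whose minimum,
`2kcP - kc²(T + k/α)`, is largest for `c = P/(T + k/α)`, where it equals `kP²/(T + k/α)`.
-/

open MeasureTheory intervalIntegral

lemma integrableOn_of_integrableOn_sq {X : Type*} [MeasurableSpace X] {μ : Measure X}
    {ν : X → ℝ} {s : Set X} (hs : μ s ≠ ⊤) (hν : AEStronglyMeasurable ν (μ.restrict s))
    (hsq : IntegrableOn (fun t => ν t ^ 2) s μ) :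
    IntegrableOn ν s μ :=
  haveI : Fact (μ s < ⊤) := ⟨hs.lt_top⟩
  ((memLp_two_iff_integrable_sq hν).2 hsq).integrable one_le_two

section IntervalIntegral

variable {ν : ℝ → ℝ} {a b : ℝ}

lemma integral_sub_const_sq (c : ℝ) (hν : IntervalIntegrable ν volume a b)
    (hsq : IntervalIntegrable (fun t => ν t ^ 2) volume a b) :
    ∫ t in a..b, (ν t - c) ^ 2 =
      (∫ t in a..b, ν t ^ 2) - 2 * c * (∫ t in a..b, ν t) + c ^ 2 * (b - a) := by
  have hexpand : (fun t => (ν t - c) ^ 2) = fun t => ν t ^ 2 - 2 * c * ν t + c ^ 2 := by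
    funext t; ring
  rw [hexpand, integral_add (hsq.sub (hν.const_mul _)) intervalIntegrable_const,
    integral_sub hsq (hν.const_mul _), intervalIntegral.integral_const_mul,
    intervalIntegral.integral_const, smul_eq_mul, mul_comm (b - a)]

lemma two_mul_integral_sub_le_integral_sq (hab : a ≤ b) (c : ℝ)
    (hν : IntervalIntegrable ν volume a b)
    (hsq : IntervalIntegrable (fun t => ν t ^ 2) volume a b) :
    2 * c * (∫ t in a..b, ν t) - c ^ 2 * (b - a) ≤ ∫ t in a..b, ν t ^ 2 := by
  have hnonneg := intervalIntegral.integral_nonneg (μ := volume) hab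
    fun t _ => sq_nonneg (ν t - c)
  rw [integral_sub_const_sq c hν hsq] at hnonneg
  linarith

end IntervalIntegral

lemma liquidation_cost_lower_bound {k α T P A B : ℝ} (c : ℝ) (hk : 0 ≤ k) (hα : 0 < α)
    (hA : 2 * c * B - c ^ 2 * T ≤ A) :
    2 * k * c * P - k * c ^ 2 * (T + k / α) ≤ k * A + α * (P - B) ^ 2 := by
  have hsquare : α * (P - B) ^ 2 - 2 * k * c * (P - B) + k ^ 2 * c ^ 2 / α
      = (α * (P - B) - k * c) ^ 2 / α := by
    field_simp; ring
  have hsquare_nonneg := div_nonneg (sq_nonneg (α * (P - B) - k * c)) hα.le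
  have hexpand : k * c ^ 2 * (T + k / α) = k * c ^ 2 * T + k ^ 2 * c ^ 2 / α := by ring
  linarith [mul_le_mul_of_nonneg_left hA hk]

theorem optimal_liquidation_general (k α T P : ℝ) (hk : 0 < k) (hα : 0 < α) (hT : 0 < T) :
    (∀ ν : ℝ → ℝ, Measurable ν →
      IntegrableOn (fun t => ν t ^ 2) (Set.Icc 0 T) →
        k * P ^ 2 / (T + k / α) ≤
          k * (∫ t in (0 : ℝ)..T, ν t ^ 2) +
            α * (P - ∫ t in (0 : ℝ)..T, ν t) ^ 2) ∧
    (k * (∫ _t in (0 : ℝ)..T, (P / (T + k / α)) ^ 2) +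
        α * (P - ∫ _t in (0 : ℝ)..T, P / (T + k / α)) ^ 2 =
      k * P ^ 2 / (T + k / α)) := by
  have hD : T + k / α ≠ 0 := by positivity
  set c := P / (T + k / α) with hc
  refine ⟨fun ν hν hsq => ?_, ?_⟩
  · have hνi : IntervalIntegrable ν volume 0 T :=
      (intervalIntegrable_iff_integrableOn_Icc_of_le hT.le).2 <|
        integrableOn_of_integrableOn_sq measure_Icc_lt_top.ne hν.aestronglyMeasurable hsq
    have hsqi : IntervalIntegrable (fun t => ν t ^ 2) volume 0 T :=
      (intervalIntegrable_iff_integrableOn_Icc_of_le hT.le).2 hsq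
    have hA := two_mul_integral_sub_le_integral_sq hT.le c hνi hsqi
    rw [sub_zero] at hA
    calc k * P ^ 2 / (T + k / α) = 2 * k * c * P - k * c ^ 2 * (T + k / α) := by
          rw [hc]; field_simp; ring
      _ ≤ _ := liquidation_cost_lower_bound c hk.le hα hA
  · simp only [intervalIntegral.integral_const, smul_eq_mul, sub_zero]
    rw [hc]
    field_simp
    ring

/-- Optimal liquidation speed: for every measurable, square-integrable strategy
`ν : [0,T] → ℝ`, the execution cost `k∫₀^T ν² + α(P − ∫₀^T ν)²` is at least
`kP²/(T + k/α)`, with equality for the constant speed `ν*(t) = P/(T + k/α)`;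
hence the constant strategy `ν*` minimizes the cost over square-integrable strategies. -/
theorem optimal_liquidation (k α T P : ℝ) (hk : 0 < k) (hα : 0 < α) (hT : 0 < T)
    (hP : 0 < P) :
    (∀ ν : ℝ → ℝ, Measurable ν →
      IntegrableOn (fun t => ν t ^ 2) (Set.Icc 0 T) →
        k * P ^ 2 / (T + k / α) ≤
          k * (∫ t in (0 : ℝ)..T, ν t ^ 2) +
            α * (P - ∫ t in (0 : ℝ)..T, ν t) ^ 2) ∧
    (k * (∫ _t in (0 : ℝ)..T, (P / (T + k / α)) ^ 2) +
        α * (P - ∫ _t in (0 : ℝ)..T, P / (T + k / α)) ^ 2 =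
      k * P ^ 2 / (T + k / α)) :=
  optimal_liquidation_general k α T P hk hα hT
end
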